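/- arXiv:1406.6357 — 4 statements merged into one kernel-verified Lean document; each statement's English description precedes it below -/
import Mathlib

section
/- Let $0 < r < 1$, let $(\Omega, \mu)$ be a probability space, and let $W$ be a set of nonnegative integrable functions on $\Omega$ such that for every finite family $f_1, \dots, f_N \in W$ the function $\left(\frac{1}{N}\sum_{n=1}^N f_n^{1/r}\right)^{r}$ has integral at most $1$. Suppose there exist $\delta > 0$, pairwise disjoint measurable sets $(E_n)_{n \ge 1}$, and functions $(f_n)_{n\ge1}$ in $W$ with $\int_{E_n} f_n\, d\mu > \delta$ for all $n$. Then for every $N$, $\delta \le N^{r - 1}$, a contradiction for large $N$; hence no such $\delta$ and sequences exist (i.e., $W$ is equi-integrable in this sense). -/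
/-!
Put `g = ∑_{n < N} f_n^{1/r}`. Pointwise `f_n = (f_n^{1/r})^r ≤ g^r = N^r ((1/N) g)^r`, and since
the `E_n` are disjoint,
`N δ < ∑_{n < N} ∫_{E_n} f_n ≤ ∫_{⋃ E_n} g^r ≤ N^r ∫ ((1/N) g)^r ≤ N^r`.
The last step needs `((1/N) g)^r` to be integrable (a Bochner integral is `0` otherwise); this
follows from `((1/N) g)^r ≤ ∑_{n < N} f_n`.
Thus `δ < N^{r-1}` for every `N ≥ 1`, which fails for large `N` because `r < 1`.
-/

open MeasureTheory Finset Filter Topology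

section PowerMean

variable {ι : Type*} {r : ℝ} {s : Finset ι} {a : ι → ℝ}

/-- Indexed by `r`: the power mean of exponent `1 / r`. -/
noncomputable def powerMean (r : ℝ) (s : Finset ι) (a : ι → ℝ) : ℝ :=
  ((∑ i ∈ s, a i ^ (1 / r)) / #s) ^ r

lemma powerMean_nonneg (ha : ∀ i ∈ s, 0 ≤ a i) : 0 ≤ powerMean r s a :=
  Real.rpow_nonneg (div_nonneg (sum_nonneg fun i hi => Real.rpow_nonneg (ha i hi) _)
    (Nat.cast_nonneg _)) _

lemma le_rpow_sum_rpow_one_div (ha : ∀ j ∈ s, 0 ≤ a j) (hr : 0 < r) {i : ι} (hi : i ∈ s) :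
    a i ≤ (∑ j ∈ s, a j ^ (1 / r)) ^ r := by
  calc a i = (a i ^ (1 / r)) ^ r := by
        rw [← Real.rpow_mul (ha i hi), one_div_mul_cancel hr.ne', Real.rpow_one]
    _ ≤ (∑ j ∈ s, a j ^ (1 / r)) ^ r :=
        Real.rpow_le_rpow (Real.rpow_nonneg (ha i hi) _)
          (single_le_sum (fun j hj => Real.rpow_nonneg (ha j hj) _) hi) hr.le

lemma le_card_rpow_mul_powerMean (ha : ∀ j ∈ s, 0 ≤ a j) (hr : 0 < r) {i : ι} (hi : i ∈ s) :
    a i ≤ (#s : ℝ) ^ r * powerMean r s a := by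
  have hs : (#s : ℝ) ≠ 0 := Nat.cast_ne_zero.mpr (card_ne_zero_of_mem hi)
  rw [powerMean, ← Real.mul_rpow (Nat.cast_nonneg _)
    (div_nonneg (sum_nonneg fun j hj => Real.rpow_nonneg (ha j hj) _) (Nat.cast_nonneg _)),
    mul_div_cancel₀ _ hs]
  exact le_rpow_sum_rpow_one_div ha hr hi

lemma powerMean_le_sum (ha : ∀ i ∈ s, 0 ≤ a i) (hr : 0 < r) :
    powerMean r s a ≤ ∑ i ∈ s, a i := by
  have hsum : 0 ≤ ∑ i ∈ s, a i := sum_nonneg ha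
  have hmean : (∑ i ∈ s, a i ^ (1 / r)) / #s ≤ (∑ i ∈ s, a i) ^ (1 / r) := by
    refine div_le_of_le_mul₀ (Nat.cast_nonneg _) (Real.rpow_nonneg hsum _) ?_
    rw [mul_comm, ← nsmul_eq_mul]
    exact sum_le_card_nsmul _ _ _ fun i hi => Real.rpow_le_rpow (ha i hi)
      (single_le_sum ha hi) (by positivity)
  calc powerMean r s a ≤ ((∑ i ∈ s, a i) ^ (1 / r)) ^ r :=
        Real.rpow_le_rpow (div_nonneg (sum_nonneg fun i hi => Real.rpow_nonneg (ha i hi) _)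
          (Nat.cast_nonneg _)) hmean hr.le
    _ = ∑ i ∈ s, a i := by
        rw [← Real.rpow_mul hsum, one_div_mul_cancel hr.ne', Real.rpow_one]

end PowerMean

section Integrals

variable {Ω ι : Type*} [MeasurableSpace Ω] {μ : Measure Ω} {s : Finset ι} {f : ι → Ω → ℝ}

lemma sum_setIntegral_le_integral {E : ι → Set Ω} (hE : ∀ i ∈ s, MeasurableSet (E i))
    (hdisj : (s : Set ι).PairwiseDisjoint E) {G : Ω → ℝ} (hG : Integrable G μ) (hG0 : 0 ≤ G)
    (hf0 : ∀ i ∈ s, 0 ≤ f i) (hfG : ∀ i ∈ s, f i ≤ G) :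
    ∑ i ∈ s, ∫ ω in E i, f i ω ∂μ ≤ ∫ ω, G ω ∂μ := by
  calc ∑ i ∈ s, ∫ ω in E i, f i ω ∂μ ≤ ∑ i ∈ s, ∫ ω in E i, G ω ∂μ :=
        sum_le_sum fun i hi => integral_mono_of_nonneg (ae_of_all _ (hf0 i hi))
          hG.integrableOn (ae_of_all _ (hfG i hi))
    _ = ∫ ω in ⋃ i ∈ s, E i, G ω ∂μ :=
        (integral_biUnion_finset s hE hdisj fun _ _ => hG.integrableOn).symm
    _ ≤ ∫ ω, G ω ∂μ := setIntegral_le_integral hG (ae_of_all _ hG0)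

variable {r : ℝ}

lemma integrable_powerMean (hf0 : ∀ i ∈ s, ∀ ω, 0 ≤ f i ω) (hf : ∀ i ∈ s, Integrable (f i) μ)
    (hr : 0 < r) : Integrable (fun ω => powerMean r s (f · ω)) μ := by
  refine (integrable_finsetSum s hf).mono' ?_ (ae_of_all _ fun ω => ?_)
  · exact (((Finset.aemeasurable_fun_sum s fun i hi => (hf i hi).aemeasurable.pow_const _).div_const
      _).pow_const _).aestronglyMeasurable
  · rw [Real.norm_of_nonneg (powerMean_nonneg fun i hi => hf0 i hi ω)]
    exact powerMean_le_sum (fun i hi => hf0 i hi ω) hr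

lemma sum_setIntegral_le_card_rpow_mul_integral_powerMean {E : ι → Set Ω}
    (hE : ∀ i ∈ s, MeasurableSet (E i)) (hdisj : (s : Set ι).PairwiseDisjoint E)
    (hf0 : ∀ i ∈ s, ∀ ω, 0 ≤ f i ω) (hf : ∀ i ∈ s, Integrable (f i) μ) (hr : 0 < r) :
    ∑ i ∈ s, ∫ ω in E i, f i ω ∂μ ≤ (#s : ℝ) ^ r * ∫ ω, powerMean r s (f · ω) ∂μ := by
  rw [← integral_const_mul]
  exact sum_setIntegral_le_integral hE hdisj ((integrable_powerMean hf0 hf hr).const_mul _)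
    (fun ω => mul_nonneg (by positivity) (powerMean_nonneg fun i hi => hf0 i hi ω)) hf0
    fun i hi ω => le_card_rpow_mul_powerMean (fun j hj => hf0 j hj ω) hr hi

end Integrals

lemma exists_nat_rpow_sub_one_lt {r δ : ℝ} (hr : r < 1) (hδ : 0 < δ) :
    ∃ N : ℕ, 0 < N ∧ (N : ℝ) ^ (r - 1) < δ := by
  have hlim : Tendsto (fun N : ℕ => (N : ℝ) ^ (r - 1)) atTop (𝓝 0) := by
    simpa only [neg_sub, Function.comp_def] using
      (tendsto_rpow_neg_atTop (sub_pos.mpr hr)).comp tendsto_natCast_atTop_atTop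
  exact ((eventually_gt_atTop 0).and (hlim.eventually (gt_mem_nhds hδ))).exists

theorem stmt_4_general {Ω : Type*} [MeasurableSpace Ω] (μ : Measure Ω)
    (r : ℝ) (hr0 : 0 < r) (hr1 : r < 1)
    (f : ℕ → Ω → ℝ) (hf_nn : ∀ n ω, 0 ≤ f n ω) (hf_int : ∀ n, Integrable (f n) μ)
    (hpow : ∀ N : ℕ, 0 < N →
      ∫ ω, ((∑ n ∈ Finset.range N, f n ω ^ (1 / r)) / N) ^ r ∂μ ≤ 1)
    (E : ℕ → Set Ω) (hE : ∀ n, MeasurableSet (E n))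
    (hdisj : Pairwise (Function.onFun Disjoint E))
    (δ : ℝ) (hδ : 0 < δ) (hlow : ∀ n, δ < ∫ ω in E n, f n ω ∂μ) :
    False := by
  obtain ⟨N, hN, hNδ⟩ := exists_nat_rpow_sub_one_lt hr1 hδ
  have hbound := sum_setIntegral_le_card_rpow_mul_integral_powerMean (μ := μ) (s := range N)
    (fun n _ => hE n) (hdisj.set_pairwise _) (fun n _ => hf_nn n) (fun n _ => hf_int n) hr0
  simp only [powerMean, card_range] at hbound
  have hNpos : (0 : ℝ) < N := Nat.cast_pos.mpr hN
  refine lt_irrefl ((N : ℝ) * δ) ?_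
  calc
    (N : ℝ) * δ < ∑ n ∈ range N, ∫ ω in E n, f n ω ∂μ := by
        simpa using sum_lt_sum_of_nonempty (nonempty_range_iff.mpr hN.ne') fun n _ => hlow n
    _ ≤ (N : ℝ) ^ r * 1 := hbound.trans (by gcongr; exact hpow N hN)
    _ = N * N ^ (r - 1) := by
        rw [Real.rpow_sub_one hNpos.ne', mul_one, mul_div_cancel₀ _ hNpos.ne']
    _ < N * δ := by gcongr

/-- Equi-integrability step in the nonlinear Maurey/Nikishin theorem: on a probability
space, if every finite family `f_1, …, f_N` from a set `W` of nonnegative integrable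
functions satisfies `∫ ((1/N) ∑ f_n^{1/r})^r dμ ≤ 1` (with `0 < r < 1`), then there can
be no `δ > 0`, pairwise disjoint sets `E_n` and functions `f_n ∈ W` with
`∫_{E_n} f_n dμ > δ` for all `n`. -/
theorem stmt_4 {Ω : Type*} [MeasurableSpace Ω] (μ : Measure Ω) [IsProbabilityMeasure μ]
    (r : ℝ) (hr0 : 0 < r) (hr1 : r < 1)
    (f : ℕ → Ω → ℝ) (hf_nn : ∀ n ω, 0 ≤ f n ω) (hf_int : ∀ n, Integrable (f n) μ)
    (hpow : ∀ N : ℕ, 0 < N →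
      ∫ ω, ((∑ n ∈ Finset.range N, f n ω ^ (1 / r)) / N) ^ r ∂μ ≤ 1)
    (E : ℕ → Set Ω) (hE : ∀ n, MeasurableSet (E n))
    (hdisj : Pairwise (Function.onFun Disjoint E))
    (δ : ℝ) (hδ : 0 < δ) (hlow : ∀ n, δ < ∫ ω in E n, f n ω ∂μ) :
    False :=
  stmt_4_general μ r hr0 hr1 f hf_nn hf_int hpow E hE hdisj δ hδ hlow
end

section
/- Let $X$ be a Banach space, $E$ a Banach lattice, $1 \le p < \infty$, and $T : X \to E$ a linear map. Then $T$ is $p$-convex (with constant $M$) if and only if $T$ is Lipschitz $p$-convex (with the same constant), where in the Lipschitz definition the metric on $X$ is the norm metric. -/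
/-!
Substituting `v j = λ_j^{1/p} • (x j - x' j)` into the `p`-convexity inequality gives the
Lipschitz one: by linearity `λ_j^{1/p} • |T x_j - T x'_j| = |T (v j)|` inside `K`, and
`‖v j‖^p = λ_j ‖x j - x' j‖^p`. Conversely, Lipschitz `p`-convexity with all `λ_j = 1` and
`x' = 0` is `p`-convexity.
-/

theorem norm_rpow_one_div_smul_rpow {X : Type*} [NormedAddCommGroup X] [NormedSpace ℝ X]
    {p t : ℝ} (hp : p ≠ 0) (ht : 0 ≤ t) (v : X) :
    ‖t ^ (1 / p) • v‖ ^ p = t * ‖v‖ ^ p := by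
  rw [norm_smul, Real.norm_eq_abs, abs_of_nonneg (by positivity),
    Real.mul_rpow (by positivity) (norm_nonneg _), ← Real.rpow_mul ht, one_div_mul_cancel hp,
    Real.rpow_one]

section PConvex

variable {X E : Type*} [NormedAddCommGroup X] [NormedSpace ℝ X]
  [NormedAddCommGroup E] [Lattice E] [NormedSpace ℝ E]
  (K : ∀ {n : ℕ}, (Fin n → E) → E) (T : X →ₗ[ℝ] E) (p M : ℝ)

def IsPConvex : Prop :=
  ∀ (n : ℕ) (v : Fin n → X), ‖K (fun j => |T (v j)|)‖ ≤ M * (∑ j, ‖v j‖ ^ p) ^ (1 / p)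

def IsLipschitzPConvex : Prop :=
  ∀ (n : ℕ) (lam : Fin n → ℝ) (x x' : Fin n → X), (∀ j, 0 ≤ lam j) →
    ‖K (fun j => lam j ^ (1 / p) • |T (x j) - T (x' j)|)‖ ≤
      M * (∑ j, lam j * ‖x j - x' j‖ ^ p) ^ (1 / p)

variable {K T p M}

theorem IsPConvex.isLipschitzPConvex (hp : p ≠ 0)
    (hK_smul : ∀ (n : ℕ) (c : Fin n → ℝ) (v : Fin n → E), (∀ j, 0 ≤ c j) →
      K (fun j => c j • |v j|) = K (fun j => |c j • v j|))
    (h : IsPConvex K T p M) : IsLipschitzPConvex K T p M := by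
  intro n lam x x' hlam
  have hc : ∀ j, 0 ≤ lam j ^ (1 / p) := fun j => Real.rpow_nonneg (hlam j) _
  have hK : K (fun j => lam j ^ (1 / p) • |T (x j) - T (x' j)|) =
      K (fun j => |T (lam j ^ (1 / p) • (x j - x' j))|) := by
    simp only [hK_smul n _ _ hc, map_smul, map_sub]
  simpa only [hK, norm_rpow_one_div_smul_rpow hp (hlam _)] using
    h n fun j => lam j ^ (1 / p) • (x j - x' j)

theorem IsLipschitzPConvex.isPConvex (h : IsLipschitzPConvex K T p M) : IsPConvex K T p M := by
  intro n v
  simpa using h n (fun _ => 1) v 0 fun _ => zero_le_one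

end PConvex

theorem stmt_8_general {X E : Type*} [NormedAddCommGroup X] [NormedSpace ℝ X]
    [NormedAddCommGroup E] [Lattice E] [NormedSpace ℝ E]
    (p : ℝ) (hp : 1 ≤ p) (T : X →ₗ[ℝ] E) (M : ℝ)
    (K : ∀ {n : ℕ}, (Fin n → E) → E)
    (hK_smul : ∀ (n : ℕ) (c : Fin n → ℝ) (v : Fin n → E), (∀ j, 0 ≤ c j) →
      K (fun j => c j • |v j|) = K (fun j => |c j • v j|)) :
    (∀ (n : ℕ) (v : Fin n → X),
        ‖K (fun j => |T (v j)|)‖ ≤ M * (∑ j, ‖v j‖ ^ p) ^ (1 / p)) ↔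
      (∀ (n : ℕ) (lam : Fin n → ℝ) (x x' : Fin n → X), (∀ j, 0 ≤ lam j) →
        ‖K (fun j => lam j ^ (1 / p) • |T (x j) - T (x' j)|)‖ ≤
          M * (∑ j, lam j * ‖x j - x' j‖ ^ p) ^ (1 / p)) :=
  ⟨IsPConvex.isLipschitzPConvex (by linarith) hK_smul, IsLipschitzPConvex.isPConvex⟩

/-- A linear map `T : X → E` from a Banach space into a Banach lattice is `p`-convex
with constant `M` if and only if it is Lipschitz `p`-convex with the same constant
(the metric on `X` being the norm metric). Here `K` denotes the Krivine functional
calculus `(v_1, …, v_n) ↦ (∑_j |v_j|^p)^{1/p}` in `E`. -/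
theorem stmt_8 {X E : Type*} [NormedAddCommGroup X] [NormedSpace ℝ X]
    [NormedAddCommGroup E] [Lattice E] [IsOrderedAddMonoid E] [HasSolidNorm E] [NormedSpace ℝ E] [CompleteSpace X] [CompleteSpace E]
    (p : ℝ) (hp : 1 ≤ p) (T : X →ₗ[ℝ] E) (M : ℝ)
    (K : ∀ {n : ℕ}, (Fin n → E) → E)
    (hK_single : ∀ u : E, K (fun _ : Fin 1 => u) = |u|)
    (hK_smul : ∀ (n : ℕ) (c : Fin n → ℝ) (v : Fin n → E), (∀ j, 0 ≤ c j) →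
      K (fun j => c j • |v j|) = K (fun j => |c j • v j|)) :
    (∀ (n : ℕ) (v : Fin n → X),
        ‖K (fun j => |T (v j)|)‖ ≤ M * (∑ j, ‖v j‖ ^ p) ^ (1 / p)) ↔
      (∀ (n : ℕ) (lam : Fin n → ℝ) (x x' : Fin n → X), (∀ j, 0 ≤ lam j) →
        ‖K (fun j => lam j ^ (1 / p) • |T (x j) - T (x' j)|)‖ ≤
          M * (∑ j, lam j * ‖x j - x' j‖ ^ p) ^ (1 / p)) :=
  stmt_8_general p hp T M K hK_smul
end

section
/- Let $E$ be a Banach lattice, $X$ a metric space, $1 \le p < \infty$. Suppose $T : X \to E$ factors as $T = \psi \circ R$ where $R : X \to W$ is a Lipschitz map into a Banach lattice $W$ which is $p$-convex with constant $M^{(p)}(I_W)$, and $\psi : W \to E$ is a positive bounded linear lattice homomorphism. Then $T$ is Lipschitz $p$-convex with $M^{(p)}_{\mathrm{Lip}}(T) \le \mathrm{Lip}(R) \cdot M^{(p)}(I_W) \cdot \|\psi\|$. -/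
/-!
Since `ψ` is a lattice homomorphism commuting with the Krivine `p`-sum, the `p`-sum of the
weighted increments `λⱼ^{1/p} |T xⱼ - T x'ⱼ|` in `E` is the image under `ψ` of the corresponding
`p`-sum of the increments of `R` in `W`. Its norm is therefore at most `‖ψ‖` times `M` times the
`ℓ^p`-norm of the weighted increments of `R`, which the Lipschitz bound on `R` controls.
-/

open Finset

lemma Real.rpow_one_div_rpow_mul {p a d : ℝ} (hp : p ≠ 0) (ha : 0 ≤ a) (hd : 0 ≤ d) :
    (a ^ (1 / p) * d) ^ p = a * d ^ p := by
  rw [Real.mul_rpow (Real.rpow_nonneg ha _) hd, ← Real.rpow_mul ha, one_div_mul_cancel hp,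
    Real.rpow_one]

lemma Real.weighted_lp_le_of_le {ι : Type*} (s : Finset ι) {p L : ℝ} (hp : 0 < p) (hL : 0 ≤ L)
    {a d e : ι → ℝ} (ha : ∀ i, 0 ≤ a i) (hd : ∀ i, 0 ≤ d i) (he : ∀ i, 0 ≤ e i)
    (hde : ∀ i, d i ≤ L * e i) :
    (∑ i ∈ s, (a i ^ (1 / p) * d i) ^ p) ^ (1 / p) ≤ L * (∑ i ∈ s, a i * e i ^ p) ^ (1 / p) := by
  have hsum : ∑ i ∈ s, (a i ^ (1 / p) * d i) ^ p ≤ L ^ p * ∑ i ∈ s, a i * e i ^ p := by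
    rw [mul_sum]
    refine sum_le_sum fun i _ => ?_
    calc (a i ^ (1 / p) * d i) ^ p = a i * d i ^ p := Real.rpow_one_div_rpow_mul hp.ne' (ha i) (hd i)
      _ ≤ a i * (L * e i) ^ p := by gcongr; exacts [ha i, hd i, hde i]
      _ = L ^ p * (a i * e i ^ p) := by rw [Real.mul_rpow hL (he i)]; ring
  have hS : 0 ≤ ∑ i ∈ s, a i * e i ^ p :=
    sum_nonneg fun i _ => mul_nonneg (ha i) (Real.rpow_nonneg (he i) _)
  calc (∑ i ∈ s, (a i ^ (1 / p) * d i) ^ p) ^ (1 / p)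
      ≤ (L ^ p * ∑ i ∈ s, a i * e i ^ p) ^ (1 / p) := by
        gcongr
        exact sum_nonneg fun i _ => Real.rpow_nonneg (mul_nonneg (Real.rpow_nonneg (ha i) _) (hd i)) _
    _ = L * (∑ i ∈ s, a i * e i ^ p) ^ (1 / p) := by
        rw [Real.mul_rpow (Real.rpow_nonneg hL _) hS, ← Real.rpow_mul hL, mul_one_div_cancel hp.ne',
          Real.rpow_one]

lemma norm_smul_abs_sub {W : Type*} [NormedAddCommGroup W] [Lattice W] [HasSolidNorm W]
    [IsOrderedAddMonoid W] [NormedSpace ℝ W] {c : ℝ} (hc : 0 ≤ c) (a b : W) :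
    ‖c • |a - b|‖ = c * dist a b := by
  rw [norm_smul, Real.norm_of_nonneg hc, norm_abs_eq_norm, dist_eq_norm]

theorem stmt_10_general {X W E : Type*} [MetricSpace X]
    [NormedAddCommGroup W] [Lattice W] [HasSolidNorm W] [IsOrderedAddMonoid W] [NormedSpace ℝ W]
    [NormedAddCommGroup E] [Lattice E] [NormedSpace ℝ E]
    (p : ℝ) (hp : 1 ≤ p) (T : X → E) (R : X → W) (ψ : W →L[ℝ] E)
    (LR M : ℝ) (hLR : 0 ≤ LR) (hM : 0 ≤ M)
    (hR : ∀ x x' : X, dist (R x) (R x') ≤ LR * dist x x')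
    (hψ_latt : ∀ w : W, ψ |w| = |ψ w|)
    (hfactor : ∀ x : X, T x = ψ (R x))
    (K_W : ∀ {n : ℕ}, (Fin n → W) → W) (K_E : ∀ {n : ℕ}, (Fin n → E) → E)
    (hψ_commute : ∀ (n : ℕ) (v : Fin n → W), ψ (K_W v) = K_E (fun j => ψ (v j)))
    (hWconv : ∀ (n : ℕ) (v : Fin n → W),
      ‖K_W v‖ ≤ M * (∑ j, ‖v j‖ ^ p) ^ (1 / p)) :
    ∀ (n : ℕ) (lam : Fin n → ℝ) (x x' : Fin n → X), (∀ j, 0 ≤ lam j) →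
      ‖K_E (fun j => lam j ^ (1 / p) • |T (x j) - T (x' j)|)‖ ≤
        (LR * M * ‖ψ‖) * (∑ j, lam j * dist (x j) (x' j) ^ p) ^ (1 / p) := by
  intro n lam x x' hlam
  set v : Fin n → W := fun j => lam j ^ (1 / p) • |R (x j) - R (x' j)|
  have hTv : K_E (fun j => lam j ^ (1 / p) • |T (x j) - T (x' j)|) = ψ (K_W v) := by
    simp only [hψ_commute, v, map_smul, hψ_latt, map_sub, hfactor]
  have hv : (∑ j, ‖v j‖ ^ p) ^ (1 / p) ≤ LR * (∑ j, lam j * dist (x j) (x' j) ^ p) ^ (1 / p) := by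
    simp only [v, norm_smul_abs_sub (Real.rpow_nonneg (hlam _) _)]
    exact Real.weighted_lp_le_of_le _ (by linarith) hLR hlam (fun _ => dist_nonneg)
      (fun _ => dist_nonneg) fun j => hR _ _
  rw [hTv]
  calc ‖ψ (K_W v)‖ ≤ ‖ψ‖ * ‖K_W v‖ := ψ.le_opNorm _
    _ ≤ ‖ψ‖ * (M * (LR * (∑ j, lam j * dist (x j) (x' j) ^ p) ^ (1 / p))) := by
        gcongr
        exact (hWconv n v).trans (by gcongr)
    _ = (LR * M * ‖ψ‖) * (∑ j, lam j * dist (x j) (x' j) ^ p) ^ (1 / p) := by ring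

/-- If `T : X → E` factors as `T = ψ ∘ R` with `R : X → W` Lipschitz, `W` a `p`-convex
Banach lattice with constant `M`, and `ψ : W → E` a positive bounded linear lattice
homomorphism (commuting with the Krivine functional calculus), then `T` is Lipschitz
`p`-convex with `M^{(p)}_{Lip}(T) ≤ Lip(R) · M · ‖ψ‖`. Here `K_W`, `K_E` denote the
Krivine `p`-sum `(v_j)_j ↦ (∑_j |v_j|^p)^{1/p}` in `W` and `E` respectively. -/
theorem stmt_10 {X W E : Type*} [MetricSpace X]
    [NormedAddCommGroup W] [Lattice W] [HasSolidNorm W] [IsOrderedAddMonoid W] [NormedSpace ℝ W] [CompleteSpace W]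
    [NormedAddCommGroup E] [Lattice E] [HasSolidNorm E] [IsOrderedAddMonoid E] [NormedSpace ℝ E] [CompleteSpace E]
    (p : ℝ) (hp : 1 ≤ p) (T : X → E) (R : X → W) (ψ : W →L[ℝ] E)
    (LR M : ℝ) (hLR : 0 ≤ LR) (hM : 0 ≤ M)
    (hR : ∀ x x' : X, dist (R x) (R x') ≤ LR * dist x x')
    (hψ_pos : ∀ w : W, 0 ≤ w → 0 ≤ ψ w)
    (hψ_latt : ∀ w : W, ψ |w| = |ψ w|)
    (hfactor : ∀ x : X, T x = ψ (R x))
    (K_W : ∀ {n : ℕ}, (Fin n → W) → W) (K_E : ∀ {n : ℕ}, (Fin n → E) → E)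
    (hK_single_W : ∀ w : W, K_W (fun _ : Fin 1 => w) = |w|)
    (hK_single_E : ∀ u : E, K_E (fun _ : Fin 1 => u) = |u|)
    (hψ_commute : ∀ (n : ℕ) (v : Fin n → W), ψ (K_W v) = K_E (fun j => ψ (v j)))
    (hWconv : ∀ (n : ℕ) (v : Fin n → W),
      ‖K_W v‖ ≤ M * (∑ j, ‖v j‖ ^ p) ^ (1 / p)) :
    ∀ (n : ℕ) (lam : Fin n → ℝ) (x x' : Fin n → X), (∀ j, 0 ≤ lam j) →
      ‖K_E (fun j => lam j ^ (1 / p) • |T (x j) - T (x' j)|)‖ ≤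
        (LR * M * ‖ψ‖) * (∑ j, lam j * dist (x j) (x' j) ^ p) ^ (1 / p) :=
  stmt_10_general p hp T R ψ LR M hLR hM hR hψ_latt hfactor K_W K_E hψ_commute hWconv
end

section
/- Let $E, F$ be Banach lattices, $G$ a Banach lattice, $V, W$ Banach lattices, $\phi : E \to V$ a continuous linear map with dense range, $\psi : W \to F$ an injective continuous linear map, $S : V \to G$ and $R : G \to W$ Lipschitz maps, and suppose $T := \psi \circ R \circ S \circ \phi : E \to F$ is linear. Then $J := R \circ S : V \to W$ is linear (i.e., additive and homogeneous). -/
open scoped NNReal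

theorem IsLinearMap.of_injective_comp {R E W F : Type*} [Semiring R]
    [AddCommMonoid E] [Module R E] [AddCommMonoid W] [Module R W] [AddCommMonoid F] [Module R F]
    (ψ : W →ₗ[R] F) (hψ : Function.Injective ψ) {f : E → W} (h : IsLinearMap R (ψ ∘ f)) :
    IsLinearMap R f where
  map_add e e' := hψ <| by simpa using h.map_add e e'
  map_smul c e := hψ <| by simpa using h.map_smul c e

theorem IsLinearMap.of_comp_denseRange {R E V W : Type*} [Semiring R]
    [AddCommMonoid E] [Module R E]
    [TopologicalSpace V] [AddCommMonoid V] [Module R V] [ContinuousAdd V] [ContinuousConstSMul R V]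
    [TopologicalSpace W] [AddCommMonoid W] [Module R W] [ContinuousAdd W] [ContinuousConstSMul R W]
    [T2Space W] (φ : E →ₗ[R] V) (hφ : DenseRange φ) {J : V → W} (hJ : Continuous J)
    (h : IsLinearMap R (J ∘ φ)) : IsLinearMap R J where
  map_add v v' := by
    have hsum : (fun p : V × V => J (p.1 + p.2)) = fun p => J p.1 + J p.2 :=
      (hφ.prodMap hφ).equalizer (hJ.comp (continuous_fst.add continuous_snd))
        ((hJ.comp continuous_fst).add (hJ.comp continuous_snd))
        (funext fun p => by simpa using h.map_add p.1 p.2)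
    exact congrFun hsum (v, v')
  map_smul c v := by
    have hscale : (fun v => J (c • v)) = fun v => c • J v :=
      hφ.equalizer (hJ.comp (continuous_const_smul c)) ((continuous_const_smul c).comp hJ)
        (funext fun e => by simpa using h.map_smul c e)
    exact congrFun hscale v

theorem stmt_17_general {E F G V W : Type*}
    [NormedAddCommGroup E] [NormedSpace ℝ E]
    [NormedAddCommGroup F] [NormedSpace ℝ F]
    [NormedAddCommGroup G]
    [NormedAddCommGroup V] [NormedSpace ℝ V]
    [NormedAddCommGroup W] [NormedSpace ℝ W]
    (φ : E →L[ℝ] V) (hφ : DenseRange φ)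
    (ψ : W →L[ℝ] F) (hψ : Function.Injective ψ)
    (S : V → G) (KS : ℝ≥0) (hS : LipschitzWith KS S)
    (R : G → W) (KR : ℝ≥0) (hR : LipschitzWith KR R)
    (T : E →ₗ[ℝ] F) (hT : ∀ e : E, T e = ψ (R (S (φ e)))) :
    (∀ v v' : V, R (S (v + v')) = R (S v) + R (S v')) ∧
      (∀ (c : ℝ) (v : V), R (S (c • v)) = c • R (S v)) := by
  have hT_linear : IsLinearMap ℝ fun e => ψ (R (S (φ e))) := funext hT ▸ T.isLinear
  have hJ_linear : IsLinearMap ℝ (R ∘ S) :=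
    .of_comp_denseRange φ.toLinearMap hφ (hR.comp hS).continuous
      (.of_injective_comp ψ.toLinearMap hψ hT_linear)
  exact ⟨hJ_linear.map_add, hJ_linear.map_smul⟩

/-- If `φ : E → V` is a continuous linear map with dense range, `ψ : W → F` an
injective continuous linear map, `S : V → G` and `R : G → W` Lipschitz maps between
Banach lattices, and the composition `T = ψ ∘ R ∘ S ∘ φ : E → F` is linear, then
`J = R ∘ S : V → W` is linear (additive and homogeneous). -/
theorem stmt_17 {E F G V W : Type*}
    [NormedAddCommGroup E] [Lattice E] [HasSolidNorm E] [IsOrderedAddMonoid E] [NormedSpace ℝ E] [CompleteSpace E]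
    [NormedAddCommGroup F] [Lattice F] [HasSolidNorm F] [IsOrderedAddMonoid F] [NormedSpace ℝ F] [CompleteSpace F]
    [NormedAddCommGroup G] [Lattice G] [HasSolidNorm G] [IsOrderedAddMonoid G] [NormedSpace ℝ G] [CompleteSpace G]
    [NormedAddCommGroup V] [Lattice V] [HasSolidNorm V] [IsOrderedAddMonoid V] [NormedSpace ℝ V] [CompleteSpace V]
    [NormedAddCommGroup W] [Lattice W] [HasSolidNorm W] [IsOrderedAddMonoid W] [NormedSpace ℝ W] [CompleteSpace W]
    (φ : E →L[ℝ] V) (hφ : DenseRange φ)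
    (ψ : W →L[ℝ] F) (hψ : Function.Injective ψ)
    (S : V → G) (KS : ℝ≥0) (hS : LipschitzWith KS S)
    (R : G → W) (KR : ℝ≥0) (hR : LipschitzWith KR R)
    (T : E →ₗ[ℝ] F) (hT : ∀ e : E, T e = ψ (R (S (φ e)))) :
    (∀ v v' : V, R (S (v + v')) = R (S v) + R (S v')) ∧
      (∀ (c : ℝ) (v : V), R (S (c • v)) = c • R (S v)) :=
  stmt_17_general φ hφ ψ hψ S KS hS R KR hR T hT
end
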